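/- Let f : [a,b] → ℝ (a < b) be such that f′ is absolutely continuous on [a,b], f″ ∈ L¹[a,b], and |f″|^q is s-convex in the second sense on [a,b] for some fixed s ∈ (0,1], where q > 1 and 1/p + 1/q = 1. Then |(1/(b−a))∫_a^b f(t) dt − f((a+b)/2)| ≤ ((b−a)²/(16(s+1)^{1/q}(2p+1)^{1/p}))[(|f″(a)|^q + |f″((a+b)/2)|^q)^{1/q} + (|f″((a+b)/2)|^q + |f″(b)|^q)^{1/q}]. -/

import Mathlib

/-!
Two integrations by parts against the kernel `K(t) = (t - a)^2/2` on `[a, m]` and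
`K(t) = (t - b)^2/2` on `[m, b]` (`m` the midpoint) write `∫ f - (b - a) f(m)` as `∫ K f''`.
On each half `[c, d]`, Hölder's inequality splits this into `(∫ K^p)^(1/p)`, computed exactly,
times `(∫ |f''|^q)^(1/q)`, and s-convexity bounds `|f''(t)|^q` by
`((d - t)/(d - c))^s |f''(c)|^q + ((t - c)/(d - c))^s |f''(d)|^q`,
whose integral is `(d - c)/(s + 1) (|f''(c)|^q + |f''(d)|^q)`.
-/

open MeasureTheory

def SConvexOn (s : ℝ) (D : Set ℝ) (g : ℝ → ℝ) : Prop :=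
  ∀ x ∈ D, ∀ y ∈ D, ∀ α β : ℝ, 0 ≤ α → 0 ≤ β → α + β = 1 →
    g (α * x + β * y) ≤ α ^ s * g x + β ^ s * g y

open Set
open scoped ENNReal

theorem SConvexOn.le_of_mem_Icc {s : ℝ} {D : Set ℝ} {g : ℝ → ℝ} (h : SConvexOn s D g)
    {c d t : ℝ} (hc : c ∈ D) (hd : d ∈ D) (hcd : c < d) (ht : t ∈ Icc c d) :
    g t ≤ ((d - t) / (d - c)) ^ s * g c + ((t - c) / (d - c)) ^ s * g d := by
  have hdc : 0 < d - c := sub_pos.2 hcd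
  have key := h c hc d hd ((d - t) / (d - c)) ((t - c) / (d - c))
    (div_nonneg (by linarith [ht.2]) hdc.le) (div_nonneg (by linarith [ht.1]) hdc.le)
    (by field_simp; ring)
  rwa [show (d - t) / (d - c) * c + (t - c) / (d - c) * d = t by field_simp; ring] at key

theorem integral_sub_const_rpow {c d e : ℝ} (he : -1 < e) :
    ∫ t in c..d, (t - c) ^ e = (d - c) ^ (e + 1) / (e + 1) := by
  rw [intervalIntegral.integral_comp_sub_right (fun u => u ^ e), sub_self,
    integral_rpow (Or.inl he), Real.zero_rpow (by linarith), sub_zero]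

theorem integral_const_sub_rpow {c d e : ℝ} (he : -1 < e) :
    ∫ t in c..d, (d - t) ^ e = (d - c) ^ (e + 1) / (e + 1) := by
  rw [intervalIntegral.integral_comp_sub_left (fun u => u ^ e), sub_self,
    integral_rpow (Or.inl he), Real.zero_rpow (by linarith), sub_zero]

theorem sq_div_two_rpow {y : ℝ} (hy : 0 ≤ y) (p : ℝ) :
    (y ^ 2 / 2) ^ p = y ^ (2 * p) / 2 ^ p := by
  rw [Real.div_rpow (sq_nonneg y) zero_le_two, ← Real.rpow_natCast, ← Real.rpow_mul hy,
    Nat.cast_ofNat]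

theorem integral_sq_div_two_rpow {c d x p : ℝ} (hcd : c ≤ d) (hx : x = c ∨ x = d)
    (hp : -1 < 2 * p) :
    ∫ t in c..d, ((t - x) ^ 2 / 2) ^ p = (d - c) ^ (2 * p + 1) / ((2 * p + 1) * 2 ^ p) := by
  rcases hx with rfl | rfl
  · rw [intervalIntegral.integral_congr (g := fun t => (t - x) ^ (2 * p) / 2 ^ p) fun t ht =>
      sq_div_two_rpow (sub_nonneg.2 (uIcc_of_le hcd ▸ ht).1) p,
      intervalIntegral.integral_div, integral_sub_const_rpow hp, div_div]
  · rw [intervalIntegral.integral_congr (g := fun t => (x - t) ^ (2 * p) / 2 ^ p) fun t ht => by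
      simp only [sub_sq_comm t x]
      exact sq_div_two_rpow (sub_nonneg.2 (uIcc_of_le hcd ▸ ht).2) p,
      intervalIntegral.integral_div, integral_const_sub_rpow hp, div_div]

theorem integral_sconvex_weights {c d s A B : ℝ} (hcd : c < d) (hs : 0 ≤ s) :
    ∫ t in c..d, (((d - t) / (d - c)) ^ s * A + ((t - c) / (d - c)) ^ s * B)
      = (d - c) / (s + 1) * (A + B) := by
  have hdc : 0 < d - c := sub_pos.2 hcd
  have hs' : -1 < s := by linarith
  have hmem : ∀ t ∈ uIcc c d, c ≤ t ∧ t ≤ d := fun t ht => by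
    rwa [uIcc_of_le hcd.le] at ht
  rw [intervalIntegral.integral_add
      (Continuous.intervalIntegrable (by fun_prop (disch := exact Or.inr hs)) c d)
      (Continuous.intervalIntegrable (by fun_prop (disch := exact Or.inr hs)) c d),
    intervalIntegral.integral_mul_const, intervalIntegral.integral_mul_const,
    intervalIntegral.integral_congr (g := fun t => (d - t) ^ s / (d - c) ^ s) fun t ht =>
      Real.div_rpow (sub_nonneg.2 (hmem t ht).2) hdc.le s,
    intervalIntegral.integral_congr (g := fun t => (t - c) ^ s / (d - c) ^ s) fun t ht =>
      Real.div_rpow (sub_nonneg.2 (hmem t ht).1) hdc.le s,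
    intervalIntegral.integral_div, intervalIntegral.integral_div, integral_const_sub_rpow hs',
    integral_sub_const_rpow hs', Real.rpow_add_one hdc.ne']
  field_simp

theorem ContinuousOn.memLp_restrict_Ioc {E : Type*} [NormedAddCommGroup E] {K : ℝ → E}
    {c d : ℝ} (hK : ContinuousOn K (Icc c d)) (r : ℝ≥0∞) :
    MemLp K r (volume.restrict (Ioc c d)) := by
  obtain ⟨C, hC⟩ := isCompact_Icc.exists_bound_of_continuousOn hK
  have hK_top : MemLp K ∞ (volume.restrict (Icc c d)) :=
    memLp_top_of_bound (hK.aestronglyMeasurable measurableSet_Icc) C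
      ((ae_restrict_iff' measurableSet_Icc).2 (ae_of_all _ hC))
  exact (hK_top.mono_exponent le_top).mono_measure
    (Measure.restrict_mono Ioc_subset_Icc_self le_rfl)

theorem integral_mul_abs_le_of_abs_rpow_le {c d p q : ℝ} (hcd : c ≤ d)
    (hpq : p.HolderConjugate q) {K g φ : ℝ → ℝ} (hK : ContinuousOn K (Icc c d))
    (hK0 : ∀ t ∈ Icc c d, 0 ≤ K t) (hg : AEStronglyMeasurable g (volume.restrict (Ioc c d)))
    (hφ : IntervalIntegrable φ volume c d) (hgφ : ∀ t ∈ Icc c d, |g t| ^ q ≤ φ t) :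
    ∫ t in c..d, K t * |g t| ≤
      (∫ t in c..d, K t ^ p) ^ (1 / p) * (∫ t in c..d, φ t) ^ (1 / q) := by
  have hIoc {u : ℝ → ℝ} : IntervalIntegrable u volume c d ↔ IntegrableOn u (Ioc c d) :=
    intervalIntegrable_iff_integrableOn_Ioc_of_le hcd
  have hgq : IntervalIntegrable (fun t => |g t| ^ q) volume c d := by
    refine hIoc.2 (Integrable.mono' (hIoc.1 hφ) ?_ ((ae_restrict_iff' measurableSet_Ioc).2
      (ae_of_all _ fun t ht => ?_)))
    · exact hg.norm.aemeasurable.pow_const q |>.aestronglyMeasurable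
    · rw [Real.norm_of_nonneg (by positivity)]
      exact hgφ t (Ioc_subset_Icc_self ht)
  have hgLq : MemLp (fun t => |g t|) (ENNReal.ofReal q) (volume.restrict (Ioc c d)) := by
    have habs : AEStronglyMeasurable (fun t => |g t|) (volume.restrict (Ioc c d)) := hg.norm
    rw [← integrable_norm_rpow_iff habs (by simpa using hpq.symm.pos) ENNReal.ofReal_ne_top,
      ENNReal.toReal_ofReal hpq.symm.nonneg]
    simp only [Real.norm_eq_abs, abs_abs]
    exact hIoc.1 hgq
  have holder := integral_mul_le_Lp_mul_Lq_of_nonneg hpq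
    ((ae_restrict_iff' measurableSet_Ioc).2
      (ae_of_all _ fun t ht => hK0 t (Ioc_subset_Icc_self ht)))
    (ae_of_all _ fun t => abs_nonneg (g t)) (hK.memLp_restrict_Ioc _) hgLq
  simp only [← intervalIntegral.integral_of_le hcd] at holder
  refine holder.trans (mul_le_mul_of_nonneg_left ?_ ?_)
  · exact Real.rpow_le_rpow (intervalIntegral.integral_nonneg hcd fun t _ => by positivity)
      (intervalIntegral.integral_mono_on hcd hgq hφ hgφ) (by simp [hpq.symm.nonneg])
  · exact Real.rpow_nonneg
      (intervalIntegral.integral_nonneg hcd fun t ht => Real.rpow_nonneg (hK0 t ht) p) _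

theorem holder_kernel_bound_eq {L p q s X : ℝ} (hL : 0 < L) (hpq : p.HolderConjugate q)
    (hs : -1 < s) (hX : 0 ≤ X) :
    (L ^ (2 * p + 1) / ((2 * p + 1) * 2 ^ p)) ^ (1 / p) * (L / (s + 1) * X) ^ (1 / q)
      = L ^ 3 / (2 * (2 * p + 1) ^ (1 / p) * (s + 1) ^ (1 / q)) * X ^ (1 / q) := by
  have hs1 : 0 < s + 1 := by linarith
  have h2p1 : 0 < 2 * p + 1 := by linarith [hpq.pos]
  have h2 : ((2 : ℝ) ^ p) ^ (1 / p) = 2 := by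
    rw [← Real.rpow_mul zero_le_two, mul_one_div_cancel hpq.ne_zero, Real.rpow_one]
  have hL3 : (L ^ (2 * p + 1)) ^ (1 / p) * L ^ (1 / q) = L ^ 3 := by
    rw [← Real.rpow_mul hL.le, ← Real.rpow_add hL, ← Real.rpow_natCast]
    congr 1
    have := hpq.inv_add_inv_eq_one
    field_simp [hpq.ne_zero, hpq.symm.ne_zero] at this ⊢
    push_cast
    linear_combination this
  rw [Real.div_rpow (by positivity) (by positivity), Real.mul_rpow h2p1.le (by positivity), h2,
    Real.mul_rpow (by positivity) hX, Real.div_rpow hL.le hs1.le, ← hL3]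
  have : (2 * p + 1) ^ (1 / p) ≠ 0 := by positivity
  have : (s + 1) ^ (1 / q) ≠ 0 := by positivity
  field_simp

theorem abs_integral_sq_mul_le_of_sconvexOn {s p q c d x : ℝ} {D : Set ℝ} {g : ℝ → ℝ}
    (hcd : c < d) (hx : x = c ∨ x = d) (hs : 0 ≤ s) (hpq : p.HolderConjugate q)
    (hg : IntervalIntegrable g volume c d) (hconv : SConvexOn s D fun t => |g t| ^ q)
    (hc : c ∈ D) (hd : d ∈ D) :
    |∫ t in c..d, (t - x) ^ 2 / 2 * g t| ≤
      (d - c) ^ 3 / (2 * (2 * p + 1) ^ (1 / p) * (s + 1) ^ (1 / q)) *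
        (|g c| ^ q + |g d| ^ q) ^ (1 / q) := by
  have hweights : IntervalIntegrable
      (fun t => ((d - t) / (d - c)) ^ s * |g c| ^ q + ((t - c) / (d - c)) ^ s * |g d| ^ q)
      volume c d :=
    Continuous.intervalIntegrable (by fun_prop (disch := exact Or.inr hs)) c d
  calc |∫ t in c..d, (t - x) ^ 2 / 2 * g t|
      ≤ ∫ t in c..d, (t - x) ^ 2 / 2 * |g t| := by
        refine (intervalIntegral.abs_integral_le_integral_abs hcd.le).trans_eq
          (intervalIntegral.integral_congr fun t _ => ?_)
        rw [abs_mul, abs_of_nonneg (by positivity)]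
    _ ≤ (∫ t in c..d, ((t - x) ^ 2 / 2) ^ p) ^ (1 / p) *
          (∫ t in c..d, (((d - t) / (d - c)) ^ s * |g c| ^ q
            + ((t - c) / (d - c)) ^ s * |g d| ^ q)) ^ (1 / q) :=
        integral_mul_abs_le_of_abs_rpow_le hcd.le hpq (by fun_prop) (fun t _ => by positivity)
          hg.1.aestronglyMeasurable hweights fun t ht => hconv.le_of_mem_Icc hc hd hcd ht
    _ = _ := by
        rw [integral_sq_div_two_rpow hcd.le hx (by linarith [hpq.pos]),
          integral_sconvex_weights hcd hs,
          holder_kernel_bound_eq (sub_pos.2 hcd) hpq (by linarith) (by positivity)]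

theorem integral_sub_sq_div_two_mul_deriv2 {c d x : ℝ} (hcd : c ≤ d) {f f' f'' : ℝ → ℝ}
    (hf' : ∀ t ∈ Icc c d, HasDerivAt f (f' t) t)
    (hf'' : ∀ t ∈ Icc c d, HasDerivAt f' (f'' t) t)
    (hint : IntervalIntegrable f'' volume c d) :
    ∫ t in c..d, (t - x) ^ 2 / 2 * f'' t =
      (d - x) ^ 2 / 2 * f' d - (c - x) ^ 2 / 2 * f' c
        - ((d - x) * f d - (c - x) * f c) + ∫ t in c..d, f t := by
  rw [← uIcc_of_le hcd] at hf' hf''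
  have hf'_int : IntervalIntegrable f' volume c d :=
    ContinuousOn.intervalIntegrable fun t ht => (hf'' t ht).continuousAt.continuousWithinAt
  have hsq : ∀ t, HasDerivAt (fun t => (t - x) ^ 2 / 2) (t - x) t := fun t => by
    simpa using (((hasDerivAt_id t).sub_const x).pow 2).div_const 2
  rw [intervalIntegral.integral_mul_deriv_eq_deriv_mul (fun t _ => hsq t) hf''
      ((continuous_sub_right x).intervalIntegrable c d) hint,
    intervalIntegral.integral_mul_deriv_eq_deriv_mul (u := fun t => t - x)
      (u' := fun _ => 1) (fun t _ => (hasDerivAt_id t).sub_const x) hf'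
      intervalIntegrable_const hf'_int]
  simp only [one_mul]
  ring

theorem integral_sub_mul_midpoint_eq {a b : ℝ} (hab : a ≤ b) {f f' f'' : ℝ → ℝ}
    (hf' : ∀ t ∈ Icc a b, HasDerivAt f (f' t) t)
    (hf'' : ∀ t ∈ Icc a b, HasDerivAt f' (f'' t) t)
    (hint : IntervalIntegrable f'' volume a b) :
    (∫ t in a..b, f t) - (b - a) * f ((a + b) / 2) =
      (∫ t in a..(a + b) / 2, (t - a) ^ 2 / 2 * f'' t)
        + ∫ t in (a + b) / 2..b, (t - b) ^ 2 / 2 * f'' t := by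
  set m := (a + b) / 2 with hm_def
  have ham : a ≤ m := by linarith
  have hmb : m ≤ b := by linarith
  have hm_mem : m ∈ uIcc a b := uIcc_of_le hab ▸ ⟨ham, hmb⟩
  have hleft : Icc a m ⊆ Icc a b := Icc_subset_Icc_right hmb
  have hright : Icc m b ⊆ Icc a b := Icc_subset_Icc_left ham
  have hf_int : IntervalIntegrable f volume a b := ContinuousOn.intervalIntegrable
    fun t ht => (hf' t (uIcc_of_le hab ▸ ht)).continuousAt.continuousWithinAt
  rw [integral_sub_sq_div_two_mul_deriv2 ham (fun t ht => hf' t (hleft ht))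
      (fun t ht => hf'' t (hleft ht)) (hint.mono_set (uIcc_subset_uIcc_left hm_mem)),
    integral_sub_sq_div_two_mul_deriv2 hmb (fun t ht => hf' t (hright ht))
      (fun t ht => hf'' t (hright ht)) (hint.mono_set (uIcc_subset_uIcc_right hm_mem)),
    ← intervalIntegral.integral_add_adjacent_intervals (b := m)
      (hf_int.mono_set (uIcc_subset_uIcc_left hm_mem))
      (hf_int.mono_set (uIcc_subset_uIcc_right hm_mem))]
  ring

theorem stmt9_general (a b : ℝ) (hab : a < b) (f f' f'' : ℝ → ℝ)
    (hf' : ∀ t ∈ Set.Icc a b, HasDerivAt f (f' t) t)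
    (hf'' : ∀ t ∈ Set.Icc a b, HasDerivAt f' (f'' t) t)
    (hint : IntervalIntegrable f'' volume a b)
    (s : ℝ) (hs0 : 0 < s)
    (p q : ℝ) (hp : 1 < p) (hpq : 1 / p + 1 / q = 1)
    (hconv : SConvexOn s (Set.Icc a b) (fun t => |f'' t| ^ q)) :
    |((1 / (b - a)) * ∫ t in a..b, f t) - f ((a + b) / 2)|
      ≤ (b - a) ^ 2 / (16 * (s + 1) ^ (1 / q) * (2 * p + 1) ^ (1 / p)) *
          ((|f'' a| ^ q + |f'' ((a + b) / 2)| ^ q) ^ (1 / q)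
            + (|f'' ((a + b) / 2)| ^ q + |f'' b| ^ q) ^ (1 / q)) := by
  have hpq' : p.HolderConjugate q :=
    Real.holderConjugate_iff.2 ⟨hp, by simpa only [one_div] using hpq⟩
  set m := (a + b) / 2 with hm_def
  have ham : a < m := by linarith
  have hmb : m < b := by linarith
  have hm : m ∈ Icc a b := ⟨ham.le, hmb.le⟩
  have hm_mem : m ∈ uIcc a b := uIcc_of_le hab.le ▸ hm
  have hleft := abs_integral_sq_mul_le_of_sconvexOn ham (Or.inl rfl) hs0.le hpq'
    (hint.mono_set (uIcc_subset_uIcc_left hm_mem)) hconv (left_mem_Icc.2 hab.le) hm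
  have hright := abs_integral_sq_mul_le_of_sconvexOn hmb (Or.inr rfl) hs0.le hpq'
    (hint.mono_set (uIcc_subset_uIcc_right hm_mem)) hconv hm (right_mem_Icc.2 hab.le)
  have hba : 0 < b - a := sub_pos.2 hab
  calc |((1 / (b - a)) * ∫ t in a..b, f t) - f m|
      = |(∫ t in a..b, f t) - (b - a) * f m| / (b - a) := by
        rw [one_div_mul_eq_div, div_sub' hba.ne', abs_div, abs_of_pos hba]
    _ ≤ ((m - a) ^ 3 / (2 * (2 * p + 1) ^ (1 / p) * (s + 1) ^ (1 / q)) *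
            (|f'' a| ^ q + |f'' m| ^ q) ^ (1 / q) +
          (b - m) ^ 3 / (2 * (2 * p + 1) ^ (1 / p) * (s + 1) ^ (1 / q)) *
            (|f'' m| ^ q + |f'' b| ^ q) ^ (1 / q)) / (b - a) := by
        rw [integral_sub_mul_midpoint_eq hab.le hf' hf'' hint]
        gcongr
        exact (abs_add_le _ _).trans (add_le_add hleft hright)
    _ = _ := by
        rw [show m - a = (b - a) / 2 by ring, show b - m = (b - a) / 2 by ring]
        field_simp
        ring

theorem stmt9 (a b : ℝ) (ha : 0 ≤ a) (hab : a < b) (f f' f'' : ℝ → ℝ)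
    (hf' : ∀ t ∈ Set.Icc a b, HasDerivAt f (f' t) t)
    (hf'' : ∀ t ∈ Set.Icc a b, HasDerivAt f' (f'' t) t)
    (hint : IntervalIntegrable f'' volume a b)
    (s : ℝ) (hs0 : 0 < s) (hs1 : s ≤ 1)
    (p q : ℝ) (hp : 1 < p) (hq : 1 < q) (hpq : 1 / p + 1 / q = 1)
    (hconv : SConvexOn s (Set.Icc a b) (fun t => |f'' t| ^ q)) :
    |((1 / (b - a)) * ∫ t in a..b, f t) - f ((a + b) / 2)|
      ≤ (b - a) ^ 2 / (16 * (s + 1) ^ (1 / q) * (2 * p + 1) ^ (1 / p)) *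
          ((|f'' a| ^ q + |f'' ((a + b) / 2)| ^ q) ^ (1 / q)
            + (|f'' ((a + b) / 2)| ^ q + |f'' b| ^ q) ^ (1 / q)) :=
  stmt9_general a b hab f f' f'' hf' hf'' hint s hs0 p q hp hpq hconv
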